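/- Let G = (L, R, E) be a bipartite graph with nonnegative, pairwise-distinct edge weights and let p ∈ [0,1]. Let L' ⊆ L be a random subset containing each vertex of L independently with probability p. Then the expected weight of the greedy matching on the subgraph induced by L' ∪ R is at least (p/(1+p)) times the weight of a maximum-weight matching of G. -/

import Mathlib

open Finset

open scoped Classical

/-- Greedy matching with fuel: repeatedly pick the maximum-weight remaining edge and
discard all edges conflicting with it. -/
noncomputable def greedyAux {α : Type*} [DecidableEq α] (w : α → ℝ)
    (conflict : α → α → Prop) : ℕ → Finset α → Finset α
  | 0, _ => ∅
  | n + 1, F =>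
    if h : F.Nonempty then
      let e := (F.exists_max_image w h).choose
      insert e (greedyAux w conflict n (F.filter fun f => ¬ conflict e f))
    else ∅

/-- The greedy matching of an edge set `F`: process edges in decreasing order of weight,
adding an edge whenever it conflicts with no previously added edge. -/
noncomputable def greedy {α : Type*} [DecidableEq α] (w : α → ℝ)
    (conflict : α → α → Prop) (F : Finset α) : Finset α :=
  greedyAux w conflict F.card F

/-- Two edges of a bipartite graph conflict iff they share an endpoint. -/
def bconf {L R : Type*} (e f : L × R) : Prop := e.1 = f.1 ∨ e.2 = f.2

/-- The edge set of the subgraph `G[U ∪ R]` induced by a set `U` of left vertices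
(together with the whole right side). -/
def subL {L R : Type*} [DecidableEq L] (E : Finset (L × R)) (U : Finset L) :
    Finset (L × R) :=
  E.filter fun e => e.1 ∈ U

/-- Expectation of `f` over a random subset of `s` containing each element
independently with probability `p`. -/
noncomputable def expSubsets {ι : Type*} (p : ℝ) (s : Finset ι) (f : Finset ι → ℝ) : ℝ :=
  ∑ A ∈ s.powerset, p ^ A.card * (1 - p) ^ (s.card - A.card) * f A

/-- A set of edges is a matching if no two distinct edges conflict. -/
def isMatching {α : Type*} (conflict : α → α → Prop) (M : Finset α) : Prop :=
  ∀ e ∈ M, ∀ f ∈ M, e ≠ f → ¬ conflict e f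

/-- `OPT`: the maximum total weight of a matching contained in the edge set `E`. -/
noncomputable def optWeight {α : Type*} (w : α → ℝ) (conflict : α → α → Prop)
    (E : Finset α) : ℝ :=
  (E.powerset.filter fun M => isMatching conflict M).sup'
    ⟨∅, Finset.mem_filter.mpr ⟨Finset.empty_mem_powerset _,
        fun e he => absurd he (Finset.notMem_empty e)⟩⟩
    (fun M => ∑ e ∈ M, w e)

/-- One step of the greedy-based online algorithm with sample `L'`: the arriving
vertex `u` gets as candidate the edge incident to `u` in `Greedy(G[L' ∪ {u}])`, and
the candidate edge is added if its right endpoint is not yet matched. -/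
noncomputable def stepB {L R : Type*} [DecidableEq L] [DecidableEq R]
    (E : Finset (L × R)) (w : L × R → ℝ) (L' : Finset L)
    (M : Finset (L × R)) (u : L) : Finset (L × R) :=
  M ∪ (greedy w bconf (subL E (insert u L'))).filter
      (fun e => e.1 = u ∧ ∀ f ∈ M, f.2 ≠ e.2)

/-- The output matching of the greedy-based online algorithm with sample `L'`,
when the online vertices arrive in the order given by `order`. -/
noncomputable def runB {L R : Type*} [DecidableEq L] [DecidableEq R]
    (E : Finset (L × R)) (w : L × R → ℝ) (L' : Finset L) (order : List L) :
    Finset (L × R) :=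
  order.foldl (stepB E w L') ∅

/-!
Let `e = (u, v)` be the heaviest edge, `E₁` the edges avoiding `u` and `E₂` those avoiding `u`
and `v`. If `u ∈ L'` (probability `p`) greedy takes `e` and continues on `E₂`, otherwise it runs
on `E₁`; and since the left vertex `u` is independent of the rest of the sample,
`𝔼 Greedy(E) = p (w e + 𝔼 Greedy(E₂)) + (1 - p) 𝔼 Greedy(E₁)`. Deleting the edges at one vertex
lowers `OPT` by at most `w e`, as a matching uses at most one of them. With `c = p / (1 + p)`,
`c OPT(E) ≤ c w e + p c (w e + OPT(E₂)) + (1 - p) c OPT(E₁)`, and `c (1 + p) = p` closes the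
induction on `E`.
-/

lemma card_filter_not_conflict_lt {α : Type*} {conflict : α → α → Prop}
    (hrefl : ∀ a, conflict a a) {F : Finset α} {e : α} (he : e ∈ F) :
    #(F.filter fun f => ¬ conflict e f) < #F :=
  card_lt_card (filter_ssubset.2 ⟨e, he, not_not.2 (hrefl e)⟩)

section Greedy

variable {α : Type*} [DecidableEq α] (w : α → ℝ) (conflict : α → α → Prop)

lemma greedyAux_subset :
    ∀ (n : ℕ) (F : Finset α), greedyAux w conflict n F ⊆ F
  | 0, _ => empty_subset _
  | n + 1, F => by
    unfold greedyAux
    split_ifs with h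
    · exact insert_subset (F.exists_max_image w h).choose_spec.1
        ((greedyAux_subset n _).trans (filter_subset _ _))
    · exact empty_subset _

lemma greedy_subset (F : Finset α) : greedy w conflict F ⊆ F :=
  greedyAux_subset w conflict _ F

lemma greedyAux_succ_of_card_le (hrefl : ∀ a, conflict a a) :
    ∀ (n : ℕ) (F : Finset α), #F ≤ n →
      greedyAux w conflict (n + 1) F = greedyAux w conflict n F
  | 0, F, hF => by simp [card_eq_zero.1 (Nat.le_zero.1 hF), greedyAux]
  | n + 1, F, hF => by
    unfold greedyAux
    split_ifs with h
    · dsimp only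
      have he := (F.exists_max_image w h).choose_spec.1
      rw [greedyAux_succ_of_card_le hrefl n _
        (Nat.lt_succ_iff.1 ((card_filter_not_conflict_lt hrefl he).trans_le hF))]
    · rfl

lemma greedyAux_eq_greedy (hrefl : ∀ a, conflict a a) {n : ℕ} {F : Finset α}
    (hn : #F ≤ n) : greedyAux w conflict n F = greedy w conflict F := by
  induction n, hn using Nat.le_induction with
  | base => rfl
  | succ n hn ih => rw [greedyAux_succ_of_card_le w conflict hrefl n F hn, ih]

lemma greedy_eq_insert_of_forall_lt (hrefl : ∀ a, conflict a a) {F : Finset α} {e : α}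
    (he : e ∈ F) (hmax : ∀ f ∈ F, f ≠ e → w f < w e) :
    greedy w conflict F = insert e (greedy w conflict (F.filter fun f => ¬ conflict e f)) := by
  have hF : F.Nonempty := ⟨e, he⟩
  obtain ⟨n, hn⟩ : ∃ n, #F = n + 1 := Nat.exists_eq_add_one.2 (card_pos.2 hF)
  obtain ⟨hcF, hcmax⟩ := (F.exists_max_image w hF).choose_spec
  have hce : (F.exists_max_image w hF).choose = e := by
    by_contra hne
    exact (hcmax e he).not_gt (hmax _ hcF hne)
  rw [greedy, hn, greedyAux, dif_pos hF]
  simp only [hce]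
  have hcard := card_filter_not_conflict_lt hrefl he
  rw [greedyAux_eq_greedy w conflict hrefl (by omega)]

end Greedy

section Expectation

variable {ι : Type*} (p : ℝ)

lemma expSubsets_congr {s : Finset ι} {f g : Finset ι → ℝ} (h : ∀ A ⊆ s, f A = g A) :
    expSubsets p s f = expSubsets p s g :=
  sum_congr rfl fun A hA => by rw [h A (mem_powerset.1 hA)]

lemma expSubsets_insert [DecidableEq ι] {i : ι} {t : Finset ι} (hi : i ∉ t) (f : Finset ι → ℝ) :
    expSubsets p (insert i t) f =
      p * expSubsets p t (fun B => f (insert i B)) + (1 - p) * expSubsets p t f := by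
  simp only [expSubsets, sum_powerset_insert hi, mul_sum]
  rw [add_comm]
  congr 1 <;> refine sum_congr rfl fun A hA => ?_
  · have hiA : i ∉ A := fun h => hi (mem_powerset.1 hA h)
    rw [card_insert_of_notMem hi, card_insert_of_notMem hiA, Nat.add_sub_add_right, pow_succ]
    ring
  · rw [card_insert_of_notMem hi, Nat.sub_add_comm (card_le_card (mem_powerset.1 hA)),
      pow_succ]
    ring

lemma expSubsets_const_add (s : Finset ι) (c : ℝ) (f : Finset ι → ℝ) :
    expSubsets p s (fun A => c + f A) = c + expSubsets p s f := by
  have htotal : ∑ A ∈ s.powerset, p ^ #A * (1 - p) ^ (#s - #A) = 1 := by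
    rw [sum_pow_mul_eq_add_pow]
    simp
  simp only [expSubsets, mul_add, sum_add_distrib, ← sum_mul, htotal, one_mul]

lemma expSubsets_insert_of_invariant [DecidableEq ι] {i : ι} {t : Finset ι} (hi : i ∉ t)
    {f : Finset ι → ℝ} (hf : ∀ B, f (insert i B) = f B) :
    expSubsets p (insert i t) f = expSubsets p t f := by
  simp only [expSubsets_insert p hi, hf]
  ring

lemma expSubsets_eq_of_cases_mem [DecidableEq ι] {s : Finset ι} {u : ι} (hu : u ∈ s)
    {f g h : Finset ι → ℝ} (hfg : ∀ A, u ∈ A → f A = g A) (hfh : ∀ A, u ∉ A → f A = h A)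
    (hg : ∀ A, g (insert u A) = g A) (hh : ∀ A, h (insert u A) = h A) :
    expSubsets p s f = p * expSubsets p s g + (1 - p) * expSubsets p s h := by
  have hu' := notMem_erase u s
  rw [← insert_erase hu, expSubsets_insert p hu', expSubsets_insert_of_invariant p hu' hg,
    expSubsets_insert_of_invariant p hu' hh]
  congr 2
  · exact expSubsets_congr p fun A _ => (hfg _ (mem_insert_self u A)).trans (hg A)
  · exact expSubsets_congr p fun A hA => hfh A fun h => hu' (hA h)

end Expectation

lemma isMatching.subset {α : Type*} {conflict : α → α → Prop} {M N : Finset α}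
    (hM : isMatching conflict M) (hNM : N ⊆ M) : isMatching conflict N :=
  fun e he f hf => hM e (hNM he) f (hNM hf)

section Opt

variable {α : Type*} (w : α → ℝ) (conflict : α → α → Prop)

lemma sum_le_optWeight {E M : Finset α} (hME : M ⊆ E) (hM : isMatching conflict M) :
    ∑ e ∈ M, w e ≤ optWeight w conflict E :=
  le_sup' (fun M => ∑ e ∈ M, w e) (mem_filter.2 ⟨mem_powerset.2 hME, hM⟩)

lemma optWeight_empty : optWeight w conflict ∅ = 0 := by
  refine le_antisymm (sup'_le _ _ fun M hM => ?_) ?_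
  · simp [subset_empty.1 (mem_powerset.1 (mem_filter.1 hM).1)]
  · simpa using sum_le_optWeight w conflict (empty_subset ∅)
      fun e he => absurd he (notMem_empty e)

lemma optWeight_le_add_of_pairwise_conflict [DecidableEq α] {E E' : Finset α} {B : ℝ}
    (hB : 0 ≤ B) (hw : ∀ f ∈ E \ E', w f ≤ B)
    (hc : (↑(E \ E') : Set α).Pairwise conflict) :
    optWeight w conflict E ≤ B + optWeight w conflict E' := by
  refine sup'_le _ _ fun M hM => ?_
  obtain ⟨hME, hMm⟩ := mem_filter.1 hM
  replace hME := mem_powerset.1 hME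
  have hrest : #(M \ E') ≤ 1 := card_le_one.2 fun a ha b hb => by
    by_contra hab
    have hsub : M \ E' ⊆ E \ E' := sdiff_subset_sdiff hME le_rfl
    exact hMm a (sdiff_subset ha) b (sdiff_subset hb) hab (hc (hsub ha) (hsub hb) hab)
  calc ∑ e ∈ M, w e = ∑ e ∈ M \ E', w e + ∑ e ∈ M ∩ E', w e := by
        rw [add_comm, sum_inter_add_sum_sdiff]
    _ ≤ #(M \ E') • B + optWeight w conflict E' := by
        gcongr
        · exact sum_le_card_nsmul _ _ _ fun f hf => hw f (sdiff_subset_sdiff hME le_rfl hf)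
        · exact sum_le_optWeight w conflict inter_subset_right (hMm.subset inter_subset_left)
    _ ≤ B + optWeight w conflict E' := by
        gcongr
        simpa using nsmul_le_nsmul_left hB hrest

lemma optWeight_le_add_filter_ne [DecidableEq α] {β : Type*} [DecidableEq β] {k : α → β}
    (hk : ∀ f g, k f = k g → conflict f g) {E : Finset α} {x : β} {B : ℝ} (hB : 0 ≤ B)
    (hw : ∀ f ∈ E, k f = x → w f ≤ B) :
    optWeight w conflict E ≤ B + optWeight w conflict (E.filter fun f => k f ≠ x) := by
  refine optWeight_le_add_of_pairwise_conflict w conflict hB (fun f hf => ?_)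
    fun f hf g hg _ => ?_
  · simp only [mem_sdiff, mem_filter, not_and, not_not] at hf
    exact hw f hf.1 (hf.2 hf.1)
  · simp only [coe_sdiff, coe_filter, Set.mem_sdiff, Set.mem_ofPred_eq, not_and, not_not]
      at hf hg
    exact hk f g ((hf.2 hf.1).trans (hg.2 hg.1).symm)

end Opt

lemma ratio_bound_step {p b O O₁ O₂ X₁ X₂ : ℝ} (hp0 : 0 ≤ p) (hp1 : p ≤ 1)
    (hO : O ≤ b + O₁) (hO₁ : O₁ ≤ b + O₂)
    (hX₁ : p / (1 + p) * O₁ ≤ X₁) (hX₂ : p / (1 + p) * O₂ ≤ X₂) :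
    p / (1 + p) * O ≤ p * (b + X₂) + (1 - p) * X₁ := by
  set c := p / (1 + p)
  have hc0 : 0 ≤ c := by positivity
  have hcb : c * b + p * (c * b) = p * b := by
    have : c * (1 + p) = p := div_mul_cancel₀ p (by positivity)
    linear_combination b * this
  linarith [mul_le_mul_of_nonneg_left hO hc0,
    mul_le_mul_of_nonneg_left hO₁ (mul_nonneg hp0 hc0), mul_le_mul_of_nonneg_left hX₂ hp0,
    mul_le_mul_of_nonneg_left hX₁ (sub_nonneg.2 hp1)]

lemma bconf_refl {L R : Type*} (e : L × R) : bconf e e := Or.inl rfl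

lemma subL_filter_fst_ne {L R : Type*} [DecidableEq L] {E : Finset (L × R)} {A : Finset L}
    {u : L} (hu : u ∉ A) : subL (E.filter fun f => f.1 ≠ u) A = subL E A := by
  ext f
  simp only [subL, mem_filter]
  exact ⟨fun h => ⟨h.1.1, h.2⟩, fun h => ⟨⟨h.1, fun hfu => hu (hfu ▸ h.2)⟩, h.2⟩⟩

section Bipartite

variable {L R : Type*} [DecidableEq L] [DecidableEq R] (w : L × R → ℝ)

noncomputable def greedyValue (E : Finset (L × R)) (A : Finset L) : ℝ :=
  ∑ e ∈ greedy w bconf (subL E A), w e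

lemma greedyValue_insert_of_forall_fst_ne {E : Finset (L × R)} {u : L} (h : ∀ f ∈ E, f.1 ≠ u)
    (A : Finset L) : greedyValue w E (insert u A) = greedyValue w E A := by
  have hsub : subL E (insert u A) = subL E A :=
    filter_congr fun f hf => by simp [h f hf]
  rw [greedyValue, greedyValue, hsub]

lemma greedyValue_of_fst_mem {E : Finset (L × R)} {e : L × R} {A : Finset L} (he : e ∈ E)
    (hmax : ∀ f ∈ E, f ≠ e → w f < w e) (hA : e.1 ∈ A) :
    greedyValue w E A =
      w e + greedyValue w ((E.filter fun f => f.1 ≠ e.1).filter fun f => f.2 ≠ e.2) A := by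
  have heA : e ∈ subL E A := mem_filter.2 ⟨he, hA⟩
  have hrest : (subL E A).filter (fun f => ¬ bconf e f) =
      subL ((E.filter fun f => f.1 ≠ e.1).filter fun f => f.2 ≠ e.2) A := by
    ext f
    simp only [subL, bconf, mem_filter]
    grind
  rw [greedyValue, greedy_eq_insert_of_forall_lt w bconf bconf_refl heA
    (fun f hf => hmax f (filter_subset _ _ hf)), hrest, sum_insert]
  · rfl
  · intro hmem
    simpa using (filter_subset _ _ (greedy_subset w bconf _ hmem))

lemma expSubsets_greedyValue [Fintype L] (p : ℝ) {E : Finset (L × R)} {e : L × R}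
    (he : e ∈ E) (hmax : ∀ f ∈ E, f ≠ e → w f < w e) :
    expSubsets p univ (greedyValue w E) =
      p * (w e + expSubsets p univ
          (greedyValue w ((E.filter fun f => f.1 ≠ e.1).filter fun f => f.2 ≠ e.2))) +
        (1 - p) * expSubsets p univ (greedyValue w (E.filter fun f => f.1 ≠ e.1)) := by
  have hE₁ : ∀ f ∈ E.filter (fun f => f.1 ≠ e.1), f.1 ≠ e.1 := fun f hf => (mem_filter.1 hf).2
  rw [← expSubsets_const_add]
  refine expSubsets_eq_of_cases_mem p (mem_univ e.1)
    (fun A hA => greedyValue_of_fst_mem w he hmax hA)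
    (fun A hA => by rw [greedyValue, greedyValue, subL_filter_fst_ne hA])
    (fun A => ?_) (greedyValue_insert_of_forall_fst_ne w hE₁)
  rw [greedyValue_insert_of_forall_fst_ne w fun f hf => hE₁ f (filter_subset _ _ hf)]

end Bipartite

theorem optWeight_mul_le_expSubsets_greedyValue {L R : Type*} [Fintype L] [DecidableEq L]
    [DecidableEq R] (w : L × R → ℝ) {p : ℝ} (hp0 : 0 ≤ p) (hp1 : p ≤ 1) (E : Finset (L × R))
    (hw0 : ∀ e ∈ E, 0 ≤ w e) (hwinj : Set.InjOn w E) :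
    p / (1 + p) * optWeight w bconf E ≤ expSubsets p univ (greedyValue w E) := by
  induction E using Finset.strongInduction with
  | H E ih =>
  rcases E.eq_empty_or_nonempty with rfl | hne
  · simp [optWeight_empty, greedyValue, subL, greedy, greedyAux, expSubsets]
  obtain ⟨e, he, hmax⟩ := E.exists_max_image w hne
  have hlt : ∀ f ∈ E, f ≠ e → w f < w e := fun f hf hfe =>
    (hmax f hf).lt_of_ne (hwinj.ne hf he hfe)
  set E₁ := E.filter fun f => f.1 ≠ e.1
  set E₂ := E₁.filter fun f => f.2 ≠ e.2
  have hE₁ : E₁ ⊂ E := filter_ssubset.2 ⟨e, he, by simp⟩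
  have hE₂ : E₂ ⊂ E := (filter_subset _ _).trans_ssubset hE₁
  have hO : optWeight w bconf E ≤ w e + optWeight w bconf E₁ :=
    optWeight_le_add_filter_ne w bconf (k := Prod.fst) (fun _ _ => Or.inl) (hw0 e he)
      fun f hf _ => hmax f hf
  have hO₁ : optWeight w bconf E₁ ≤ w e + optWeight w bconf E₂ :=
    optWeight_le_add_filter_ne w bconf (k := Prod.snd) (fun _ _ => Or.inr) (hw0 e he)
      fun f hf _ => hmax f (hE₁.subset hf)
  rw [expSubsets_greedyValue w p he hlt]
  exact ratio_bound_step hp0 hp1 hO hO₁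
    (ih E₁ hE₁ (fun f hf => hw0 f (hE₁.subset hf)) (hwinj.mono (coe_subset.2 hE₁.subset)))
    (ih E₂ hE₂ (fun f hf => hw0 f (hE₂.subset hf)) (hwinj.mono (coe_subset.2 hE₂.subset)))

/-- If `L' ⊆ L` contains each left vertex independently with
probability `p`, then the expected weight of the greedy matching on `G[L' ∪ R]` is at
least `p/(1+p)` times the weight of a maximum-weight matching of `G`. -/
theorem stmt3 {L R : Type*} [Fintype L] [DecidableEq L] [DecidableEq R]
    (E : Finset (L × R)) (w : L × R → ℝ)
    (hw0 : ∀ e ∈ E, 0 ≤ w e) (hwinj : Set.InjOn w ↑E)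
    (p : ℝ) (hp : p ∈ Set.Icc (0 : ℝ) 1) :
    expSubsets p Finset.univ (fun A => ∑ e ∈ greedy w bconf (subL E A), w e)
      ≥ (p / (1 + p)) * optWeight w bconf E :=
  optWeight_mul_le_expSubsets_greedyValue w hp.1 hp.2 E hw0 hwinj
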